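/- For 0 < q < 1, the limit as M → ∞ of (d(M)² + d(M+1)²) / (∑_{k=0}^{M} d(k)²) equals q^{-2} - q², where d(n) = [n+1]_q. -/

import Mathlib

noncomputable def qnum (q : ℝ) (n : ℕ) : ℝ := (q⁻¹ ^ n - q ^ n) / (q⁻¹ - q)

noncomputable def d (q : ℝ) (n : ℕ) : ℝ := qnum q (n + 1)

noncomputable def Tf (q : ℝ) (M : ℕ) : ℝ :=
  1 + q⁻¹^2 - 4*q^(2*M+2) + (q^(2*M+2))^2 + q^2*(q^(2*M+2))^2

noncomputable def Bf (q : ℝ) (M : ℕ) : ℝ :=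
  (1 - q^(2*M+2) + q^2*q^(2*M+2) - q^2*(q^(2*M+2))^2)/(1-q^2) - 2*((M+1)*q^(2*M+2))

theorem stmt_7 (q : ℝ) (hq : 0 < q) (hq1 : q < 1) :
    Filter.Tendsto
      (fun M : ℕ => (d q M ^ 2 + d q (M + 1) ^ 2) / (∑ k ∈ Finset.range (M + 1), d q k ^ 2))
      Filter.atTop (nhds (q⁻¹ ^ 2 - q ^ 2)) := by
  have hq0 : q ≠ 0 := hq.ne'
  have h1q2 : (1:ℝ) - q^2 ≠ 0 := by nlinarith
  have hceq : q⁻¹ - q = (1 - q^2)/q := by field_simp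
  have hc : q⁻¹ - q ≠ 0 := by rw [hceq]; exact div_ne_zero h1q2 hq0
  have hd : ∀ k : ℕ, (q⁻¹ - q) * d q k = (q^(k+1))⁻¹ - q^(k+1) := by
    intro k
    simp only [d, qnum, ← inv_pow]
    rw [mul_div_cancel₀ _ hc]
  have hd0 : d q 0 = 1 := by simp [d, qnum, div_self hc]
  -- closed form of the sum
  have hS : ∀ M : ℕ, q^(2*M+2)*(q⁻¹-q)^2 * ∑ k ∈ Finset.range (M+1), d q k ^ 2 = Bf q M := by
    intro M
    induction M with
    | zero =>
      simp only [zero_add, Finset.sum_range_one, hd0, Bf, one_pow, mul_one]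
      rw [hceq]
      push_cast
      field_simp
      ring
    | succ M ih =>
      rw [Finset.sum_range_succ]
      have hpow2 : q^(M+2) ≠ 0 := pow_ne_zero _ hq0
      have h2 : q^(2*(M+1)+2)*(q⁻¹-q)^2 *
            ((∑ k ∈ Finset.range (M+1), d q k ^ 2) + d q (M+1)^2)
          = q^2*(q^(2*M+2)*(q⁻¹-q)^2 * ∑ k ∈ Finset.range (M+1), d q k ^ 2)
            + q^(2*(M+1)+2)*((q⁻¹-q) * d q (M+1))^2 := by ring
      rw [h2, ih, hd]
      simp only [Bf]
      push_cast
      field_simp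
      ring
  -- closed form of the numerator
  have hN : ∀ M : ℕ, q^(2*M+2)*(q⁻¹-q)^2 * (d q M ^ 2 + d q (M+1) ^ 2) = Tf q M := by
    intro M
    have hpow : q^(M+1) ≠ 0 := pow_ne_zero _ hq0
    have hpow2 : q^(M+2) ≠ 0 := pow_ne_zero _ hq0
    have h1 : q^(2*M+2)*(q⁻¹-q)^2 * (d q M ^ 2 + d q (M+1) ^ 2)
        = q^(2*M+2)*(((q⁻¹-q) * d q M)^2 + ((q⁻¹-q) * d q (M+1))^2) := by ring
    rw [h1, hd, hd]
    simp only [Tf, inv_pow]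
    field_simp
    ring
  have hkey : ∀ M : ℕ, (d q M ^ 2 + d q (M + 1) ^ 2) / (∑ k ∈ Finset.range (M + 1), d q k ^ 2)
      = Tf q M / Bf q M := by
    intro M
    rw [← hS M, ← hN M]
    have hcc : q^(2*M+2)*(q⁻¹-q)^2 ≠ 0 :=
      mul_ne_zero (pow_ne_zero _ hq0) (pow_ne_zero _ hc)
    exact (mul_div_mul_left _ _ hcc).symm
  -- limits
  have hq2 : q^2 < 1 := by nlinarith
  have hq2nn : (0:ℝ) ≤ q^2 := sq_nonneg q
  have hx : Filter.Tendsto (fun M : ℕ => q^(2*M+2)) Filter.atTop (nhds 0) := by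
    have h := (tendsto_pow_atTop_nhds_zero_of_lt_one hq2nn hq2).comp
      (Filter.tendsto_add_atTop_nat 1)
    refine h.congr fun M => ?_
    simp only [Function.comp]
    rw [← pow_mul]
    ring_nf
  have hMx : Filter.Tendsto (fun M : ℕ => ((M:ℝ)+1)*q^(2*M+2)) Filter.atTop (nhds 0) := by
    have h := (tendsto_self_mul_const_pow_of_lt_one hq2nn hq2).comp
      (Filter.tendsto_add_atTop_nat 1)
    refine h.congr fun M => ?_
    simp only [Function.comp]
    push_cast
    rw [← pow_mul]
    ring_nf
  have hT : Filter.Tendsto (fun M : ℕ => Tf q M) Filter.atTop (nhds (1 + q⁻¹^2)) := by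
    have h : Filter.Tendsto (fun M : ℕ => Tf q M) Filter.atTop
        (nhds (1 + q⁻¹^2 - 4*0 + 0^2 + q^2*0^2)) :=
      (((tendsto_const_nhds.sub (hx.const_mul 4)).add (hx.pow 2)).add
        ((hx.pow 2).const_mul _))
    simpa using h
  have hB : Filter.Tendsto (fun M : ℕ => Bf q M) Filter.atTop (nhds (1/(1-q^2))) := by
    have h : Filter.Tendsto (fun M : ℕ => Bf q M) Filter.atTop
        (nhds ((1 - 0 + q^2*0 - q^2*0^2)/(1-q^2) - 2*0)) := by
      refine Filter.Tendsto.sub ?_ (hMx.const_mul 2)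
      exact (((tendsto_const_nhds.sub hx).add (hx.const_mul _)).sub
        ((hx.pow 2).const_mul _)).div_const _
    simpa using h
  have hBne : (1:ℝ)/(1-q^2) ≠ 0 := one_div_ne_zero h1q2
  have hlim := hT.div hB hBne
  have hval : (1 + q⁻¹^2)/(1/(1-q^2)) = q⁻¹^2 - q^2 := by
    field_simp
    ring
  rw [hval] at hlim
  exact hlim.congr fun M => (hkey M).symm
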